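/- arXiv:1403.2378 — 2 statements merged into one kernel-verified Lean document; each statement's English description precedes it below -/
import Mathlib

section
/- Fix β > 0. There is a constant C such that for every integer n > 1 and every continuous function f : ℝ → ℂ with f(x) → 0 as |x| → ∞, sup_{x∈ℝ} |R_nf(x)| ≤ C (log n) sup_{x∈ℝ} |f(x)|. That is, the interpolation operator R_n has operator norm at most C log n from C⁰₀(ℝ) to C⁰₀(ℝ). -/
/-- The Möbius map `M_β(x) = (x - iβ)/(x + iβ)` for real `x`. -/
noncomputable def Mob (β : ℝ) (x : ℝ) : ℂ :=
  ((x : ℂ) - Complex.I * β) / ((x : ℂ) + Complex.I * β)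

/-- The change of variables `T(θ) = -β cot(θ/2)` mapping `(0, 2π)` onto `ℝ`. -/
noncomputable def Tmap (β : ℝ) (θ : ℝ) : ℝ :=
  -β * (Real.cos (θ / 2) / Real.sin (θ / 2))

/-- Discrete Fourier coefficients `F̃_k = (1/n) ∑_{ℓ=0}^{n-1} e^{-ikθ_ℓ} F(θ_ℓ)`. -/
noncomputable def dftCoeff (n : ℕ) (F : ℝ → ℂ) (k : ℤ) : ℂ :=
  (n : ℂ)⁻¹ * ∑ ℓ ∈ Finset.range n,
    Complex.exp (-Complex.I * (k : ℂ) * ((2 * Real.pi * ℓ / n : ℝ) : ℂ)) *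
      F (2 * Real.pi * ℓ / n)

/-- The rational interpolant `R_n f(x) = ∑_{k=-n₋}^{n₊} F̃_k (M_β(x)^k − 1)`. -/
noncomputable def ratInterp (β : ℝ) (n : ℕ) (F : ℝ → ℂ) (x : ℝ) : ℂ :=
  ∑ k ∈ Finset.Icc (-(((n - 1) / 2 : ℕ) : ℤ)) ((n / 2 : ℕ) : ℤ),
    dftCoeff n F k * (Mob β x ^ k - 1)

/-!
Since `‖M_β(x)‖ = 1`, write `M_β(x) = e^{it}`. Exchanging the two finite sums gives
`R_n f(x) = (1/n) ∑_ℓ F(θ_ℓ) (D_n(t - θ_ℓ) - D_n(-θ_ℓ))`, where `D_n` is the Dirichlet kernel of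
the frequencies `-n₋, …, n₊`. The subtracted terms vanish (`D_n(-θ_ℓ) = 0` for `0 < ℓ < n`, as a
sum over a nontrivial `n`-th root of unity, and `F(0) = 0`), so `‖R_n f(x)‖` is at most `sup ‖f‖`
times the discrete Lebesgue function `(1/n) ∑_ℓ ‖D_n(t - θ_ℓ)‖`.

Since `‖D_n(ψ)‖ ≤ min(n, 1/|sin(ψ/2)|)` and the node sum is `2π/n`-periodic in `t`, it suffices to
take `t ∈ [0, 2π/n)`; then Jordan's inequality bounds all but two terms by
`(n/2)(1/(ℓ-1) + 1/(n-ℓ))`, and the sum is at most `n (2 + H_{n-2}) ≤ n (3 + log n)`.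
-/

open Real Finset Function

theorem sum_Icc_zpow_eq {K : Type*} [DivisionRing K] {z : K} (hz : z ≠ 0) (a b : ℕ) :
    ∑ k ∈ Icc (-(a : ℤ)) b, z ^ k = z ^ (-(a : ℤ)) * ∑ j ∈ range (a + b + 1), z ^ j := by
  rw [mul_sum]
  refine sum_nbij' (fun k => (k + a).toNat) (fun j => (j : ℤ) - a) ?_ ?_ ?_ ?_ fun k hk => ?_
  iterate 4 · intro k hk; simp only [mem_Icc, mem_range] at hk ⊢; omega
  simp only [mem_Icc] at hk
  rw [← zpow_natCast, ← zpow_add₀ hz]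
  congr 1
  omega

theorem norm_geom_sum_le {𝕜 : Type*} [NormedDivisionRing 𝕜] {z : 𝕜} (hz : ‖z‖ ≤ 1) (n : ℕ) :
    ‖∑ j ∈ range n, z ^ j‖ ≤ n := by
  calc ‖∑ j ∈ range n, z ^ j‖ ≤ ∑ j ∈ range n, ‖z‖ ^ j := by
        simpa only [norm_pow] using norm_sum_le (range n) (z ^ ·)
    _ ≤ ∑ _j ∈ range n, (1 : ℝ) := sum_le_sum fun j _ => pow_le_one₀ (norm_nonneg z) hz
    _ = n := by simp

theorem norm_geom_sum_mul_norm_sub_one_le {𝕜 : Type*} [NormedDivisionRing 𝕜] {z : 𝕜}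
    (hz : ‖z‖ ≤ 1) (n : ℕ) : ‖∑ j ∈ range n, z ^ j‖ * ‖z - 1‖ ≤ 2 := by
  rw [← norm_mul, geom_sum_mul]
  calc ‖z ^ n - 1‖ ≤ ‖z‖ ^ n + ‖(1 : 𝕜)‖ := by rw [← norm_pow]; exact norm_sub_le _ _
    _ ≤ 2 := by rw [norm_one]; linarith [pow_le_one₀ (norm_nonneg z) hz (n := n)]

noncomputable def dirichletKernel (n : ℕ) (ψ : ℝ) : ℂ :=
  ∑ k ∈ Icc (-(((n - 1) / 2 : ℕ) : ℤ)) ((n / 2 : ℕ) : ℤ), Complex.exp (Complex.I * ψ) ^ k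

namespace dirichletKernel

variable {n : ℕ}

theorem norm_eq (hn : n ≠ 0) (ψ : ℝ) :
    ‖dirichletKernel n ψ‖ = ‖∑ j ∈ range n, Complex.exp (Complex.I * ψ) ^ j‖ := by
  have hsplit : (n - 1) / 2 + n / 2 + 1 = n := by omega
  rw [dirichletKernel, sum_Icc_zpow_eq (Complex.exp_ne_zero _), hsplit, norm_mul, norm_zpow,
    Complex.norm_exp_I_mul_ofReal, one_zpow, one_mul]

theorem norm_le (hn : n ≠ 0) (ψ : ℝ) : ‖dirichletKernel n ψ‖ ≤ n := by
  rw [norm_eq hn]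
  exact norm_geom_sum_le (Complex.norm_exp_I_mul_ofReal ψ).le n

theorem norm_mul_abs_sin_le (hn : n ≠ 0) (ψ : ℝ) :
    ‖dirichletKernel n ψ‖ * |sin (ψ / 2)| ≤ 1 := by
  have h := norm_geom_sum_mul_norm_sub_one_le (Complex.norm_exp_I_mul_ofReal ψ).le n
  rw [Complex.norm_exp_I_mul_ofReal_sub_one, norm_mul, Real.norm_two, Real.norm_eq_abs] at h
  rw [norm_eq hn]
  linarith

theorem periodic (n : ℕ) : Periodic (dirichletKernel n) (2 * π) := by
  intro ψ
  have h : Complex.exp (Complex.I * ↑(ψ + 2 * π)) = Complex.exp (Complex.I * ψ) := by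
    rw [← Complex.exp_periodic (Complex.I * ψ)]
    push_cast
    ring_nf
  simp only [dirichletKernel, h]

theorem neg_node_eq_zero {ℓ : ℕ} (hℓ0 : ℓ ≠ 0) (hℓn : ℓ < n) :
    dirichletKernel n (-(2 * π * ℓ / n)) = 0 := by
  have hn : n ≠ 0 := by omega
  have hζ := (Complex.isPrimitiveRoot_exp n hn).inv
  have hz : Complex.exp (Complex.I * ↑(-(2 * π * ℓ / n))) =
      (Complex.exp (2 * π * Complex.I / n))⁻¹ ^ ℓ := by
    rw [← Complex.exp_neg, ← Complex.exp_nat_mul]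
    congr 1
    push_cast
    ring
  rw [← norm_eq_zero, norm_eq hn, norm_eq_zero, hz]
  set z := (Complex.exp (2 * π * Complex.I / n))⁻¹ ^ ℓ
  have hz1 : z - 1 ≠ 0 := sub_ne_zero.mpr (hζ.pow_ne_one_of_pos_of_lt hℓ0 hℓn)
  have hzn : z ^ n = 1 := by rw [← pow_mul, mul_comm ℓ n, pow_mul, hζ.pow_eq_one, one_pow]
  exact (mul_eq_zero.mp (by rw [geom_sum_mul, hzn, sub_self])).resolve_right hz1

end dirichletKernel

theorem inv_sin_le_of_le_pi_div_two {x : ℝ} (hx0 : 0 < x) (hx : x ≤ π / 2) :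
    (sin x)⁻¹ ≤ π / 2 * x⁻¹ := by
  have h := mul_le_sin hx0.le hx
  calc (sin x)⁻¹ ≤ (2 / π * x)⁻¹ := inv_anti₀ (by positivity) h
    _ = π / 2 * x⁻¹ := by rw [mul_inv, inv_div]

theorem inv_sin_le {x : ℝ} (hx0 : 0 < x) (hxπ : x < π) :
    (sin x)⁻¹ ≤ π / 2 * (x⁻¹ + (π - x)⁻¹) := by
  have hx₁ : 0 ≤ π / 2 * x⁻¹ := by positivity
  have hx₂ : 0 ≤ π / 2 * (π - x)⁻¹ := by have := sub_pos.mpr hxπ; positivity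
  rw [mul_add]
  rcases le_total x (π / 2) with hx | hx
  · linarith [inv_sin_le_of_le_pi_div_two hx0 hx]
  · have := inv_sin_le_of_le_pi_div_two (sub_pos.mpr hxπ) (by linarith)
    rw [sin_pi_sub] at this
    linarith

theorem sum_range_inv_sub_eq_harmonic (m : ℕ) :
    ∑ i ∈ range m, ((m : ℝ) - i)⁻¹ = harmonic m := by
  rw [harmonic, Rat.cast_sum, ← sum_range_reflect]
  refine sum_congr rfl fun i hi => ?_
  have hi : i < m := mem_range.mp hi
  push_cast [Nat.cast_sub (by omega : i ≤ m - 1), Nat.cast_sub (by omega : 1 ≤ m)]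
  ring_nf

section NodeSums

variable {g : ℝ → ℝ} {n : ℕ}

theorem periodic_sum_sub_nodes (hg : Periodic g (2 * π)) (n : ℕ) :
    Periodic (fun t => ∑ ℓ ∈ range n, g (t - 2 * π * ℓ / n)) (2 * π / n) := by
  intro t
  rcases n with _ | m
  · simp
  have hn : ((m + 1 : ℕ) : ℝ) ≠ 0 := by positivity
  simp only
  rw [sum_range_succ', sum_range_succ]
  congr 1
  · refine sum_congr rfl fun i _ => congrArg g ?_
    field_simp
    push_cast
    ring
  · conv_rhs => rw [← hg]
    congr 1
    field_simp
    push_cast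
    ring

theorem apply_sub_node_le (hsin : ∀ ψ, g ψ * |sin (ψ / 2)| ≤ 1) {ℓ : ℕ} {t : ℝ}
    (ht : t ∈ Set.Ico 0 (2 * π / n)) (hℓ : 2 ≤ ℓ) (hℓn : ℓ < n) :
    g (t - 2 * π * ℓ / n) ≤ n / 2 * (((ℓ : ℝ) - 1)⁻¹ + ((n : ℝ) - ℓ)⁻¹) := by
  have hℓ' : (2 : ℝ) ≤ ℓ := by exact_mod_cast hℓ
  have hℓn' : (ℓ : ℝ) < n := by exact_mod_cast hℓn
  have hn : (0 : ℝ) < n := by linarith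
  set x := π * ℓ / n - t / 2 with hx
  have ht' : t / 2 < π / n := by
    have := ht.2
    rw [lt_div_iff₀ hn] at this ⊢
    linarith
  have hx₁ : π * (ℓ - 1) / n < x := by
    have : π * (ℓ - 1) / n = π * ℓ / n - π / n := by field_simp
    linarith
  have hx₂ : π * (n - ℓ) / n ≤ π - x := by
    have : π * (n - ℓ) / n = π - π * ℓ / n := by field_simp
    linarith [ht.1]
  have hpos₁ : 0 < π * (ℓ - 1) / n := div_pos (mul_pos pi_pos (by linarith)) hn
  have hpos₂ : 0 < π * (n - ℓ) / n := div_pos (mul_pos pi_pos (by linarith)) hn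
  have hsinx : 0 < sin x := sin_pos_of_pos_of_lt_pi (by linarith) (by linarith)
  have habs : |sin ((t - 2 * π * ℓ / n) / 2)| = sin x := by
    rw [show (t - 2 * π * ℓ / n) / 2 = -x by ring, sin_neg, abs_neg, abs_of_pos hsinx]
  calc g (t - 2 * π * ℓ / n) ≤ (sin x)⁻¹ := by
        rw [← one_div, le_div_iff₀ hsinx, ← habs]
        exact hsin _
    _ ≤ π / 2 * (x⁻¹ + (π - x)⁻¹) := inv_sin_le (by linarith) (by linarith)
    _ ≤ π / 2 * ((π * (ℓ - 1) / n)⁻¹ + (π * (n - ℓ) / n)⁻¹) := by gcongr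
    _ = n / 2 * (((ℓ : ℝ) - 1)⁻¹ + ((n : ℝ) - ℓ)⁻¹) := by
        field_simp

theorem sum_sub_nodes_le_of_mem_Ico (hle : ∀ ψ, g ψ ≤ n)
    (hsin : ∀ ψ, g ψ * |sin (ψ / 2)| ≤ 1) (hn : 2 ≤ n) {t : ℝ}
    (ht : t ∈ Set.Ico 0 (2 * π / n)) :
    ∑ ℓ ∈ range n, g (t - 2 * π * ℓ / n) ≤ n * (3 + log n) := by
  obtain ⟨m, rfl⟩ : ∃ m, n = m + 2 := ⟨n - 2, by omega⟩
  have htail : ∑ i ∈ range m, g (t - 2 * π * ↑(i + 1 + 1) / ↑(m + 2)) ≤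
      (m + 2 : ℕ) * (harmonic m : ℝ) := calc
    _ ≤ ∑ i ∈ range m, (m + 2 : ℕ) / 2 * (((i : ℝ) + 1)⁻¹ + ((m : ℝ) - i)⁻¹) := by
        refine sum_le_sum fun i hi => (apply_sub_node_le hsin ht (by omega)
          (by simpa using hi)).trans_eq ?_
        push_cast
        ring_nf
    _ = (m + 2 : ℕ) * (harmonic m : ℝ) := by
        rw [← mul_sum, sum_add_distrib, sum_range_inv_sub_eq_harmonic, harmonic, Rat.cast_sum]
        push_cast
        ring
  have hlog : (harmonic m : ℝ) ≤ 1 + log ↑(m + 2) := by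
    refine (harmonic_le_one_add_log m).trans (add_le_add_right ?_ 1)
    rcases m.eq_zero_or_pos with rfl | hm
    · simpa using log_natCast_nonneg 2
    · exact log_le_log (by exact_mod_cast hm) (by push_cast; linarith)
  rw [sum_range_succ', sum_range_succ']
  have := hle (t - 2 * π * ↑(0 + 1) / ↑(m + 2))
  have := hle (t - 2 * π * ↑0 / ↑(m + 2))
  have := mul_le_mul_of_nonneg_left hlog (Nat.cast_nonneg (α := ℝ) (m + 2))
  linarith

theorem sum_sub_nodes_le (hg : Periodic g (2 * π)) (hle : ∀ ψ, g ψ ≤ n)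
    (hsin : ∀ ψ, g ψ * |sin (ψ / 2)| ≤ 1) (hn : 2 ≤ n) (t : ℝ) :
    ∑ ℓ ∈ range n, g (t - 2 * π * ℓ / n) ≤ n * (3 + log n) := by
  obtain ⟨s, hs, hts⟩ := (periodic_sum_sub_nodes hg n).exists_mem_Ico₀ (by positivity) t
  exact hts ▸ sum_sub_nodes_le_of_mem_Ico hle hsin hn hs

end NodeSums

theorem norm_Mob {β : ℝ} (hβ : β ≠ 0) (x : ℝ) : ‖Mob β x‖ = 1 := by
  have hconj : (x : ℂ) - Complex.I * β = (starRingEnd ℂ) ((x : ℂ) + Complex.I * β) := by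
    simp [Complex.conj_ofReal, sub_eq_add_neg]
  have hne : (x : ℂ) + Complex.I * β ≠ 0 := by
    intro h
    simpa [hβ] using congrArg Complex.im h
  rw [Mob, hconj, norm_div, Complex.norm_conj, div_self (norm_ne_zero_iff.mpr hne)]

theorem ratInterp_eq_sum_dirichletKernel {β x t : ℝ} (n : ℕ) (F : ℝ → ℂ)
    (hM : Mob β x = Complex.exp (Complex.I * t)) :
    ratInterp β n F x = (n : ℂ)⁻¹ * ∑ ℓ ∈ range n, F (2 * π * ℓ / n) *
      (dirichletKernel n (t - 2 * π * ℓ / n) - dirichletKernel n (-(2 * π * ℓ / n))) := by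
  have hterm : ∀ (k : ℤ) (θ : ℝ), Complex.exp (-Complex.I * k * θ) * (Mob β x ^ k - 1) =
      Complex.exp (Complex.I * ↑(t - θ)) ^ k - Complex.exp (Complex.I * ↑(-θ)) ^ k := by
    intro k θ
    simp only [hM, ← Complex.exp_int_mul, mul_sub, mul_one, ← Complex.exp_add]
    push_cast
    ring_nf
  simp only [ratInterp, dftCoeff, dirichletKernel, ← sum_sub_distrib, mul_sum, sum_mul]
  rw [sum_comm]
  refine sum_congr rfl fun ℓ _ => sum_congr rfl fun k _ => ?_
  rw [← hterm]
  ring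

theorem norm_ratInterp_le {β : ℝ} (hβ : β ≠ 0) {n : ℕ} (hn : 2 ≤ n) {F : ℝ → ℂ} {S : ℝ}
    (hF0 : F 0 = 0) (hFS : ∀ ℓ < n, ‖F (2 * π * ℓ / n)‖ ≤ S) (x : ℝ) :
    ‖ratInterp β n F x‖ ≤ (3 + log n) * S := by
  have hn0 : n ≠ 0 := by omega
  obtain ⟨t, ht⟩ : ∃ t : ℝ, Mob β x = Complex.exp (Complex.I * t) :=
    ⟨(Mob β x).arg, by
      simpa [norm_Mob hβ, mul_comm] using (Complex.norm_mul_exp_arg_mul_I (Mob β x)).symm⟩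
  have hvanish : ∀ ℓ ∈ range n,
      F (2 * π * ℓ / n) * dirichletKernel n (-(2 * π * ℓ / n)) = 0 := by
    intro ℓ hℓ
    rcases Nat.eq_zero_or_pos ℓ with rfl | hℓ0
    · simp [hF0]
    · rw [dirichletKernel.neg_node_eq_zero hℓ0.ne' (mem_range.mp hℓ), mul_zero]
  rw [ratInterp_eq_sum_dirichletKernel n F ht]
  simp only [mul_sub, sum_sub_distrib, sum_congr rfl hvanish, sum_const_zero, sub_zero]
  calc ‖(n : ℂ)⁻¹ * ∑ ℓ ∈ range n, F (2 * π * ℓ / n) * dirichletKernel n (t - 2 * π * ℓ / n)‖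
      ≤ (n : ℝ)⁻¹ * ∑ ℓ ∈ range n, S * ‖dirichletKernel n (t - 2 * π * ℓ / n)‖ := by
        rw [norm_mul, norm_inv, Complex.norm_natCast]
        gcongr
        refine (norm_sum_le _ _).trans (sum_le_sum fun ℓ hℓ => ?_)
        rw [norm_mul]
        gcongr
        exact hFS ℓ (mem_range.mp hℓ)
    _ ≤ (n : ℝ)⁻¹ * (S * (n * (3 + log n))) := by
        rw [← mul_sum]
        gcongr
        · simpa [hF0] using hFS 0 (by omega)
        · exact sum_sub_nodes_le ((dirichletKernel.periodic n).comp norm)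
            (dirichletKernel.norm_le hn0) (dirichletKernel.norm_mul_abs_sin_le hn0) hn t
    _ = (3 + log n) * S := by
        field_simp

theorem node_mem_Ioo {n ℓ : ℕ} (hℓ0 : 0 < ℓ) (hℓn : ℓ < n) :
    2 * π * ℓ / n ∈ Set.Ioo 0 (2 * π) := by
  have hℓn' : (ℓ : ℝ) < n := by exact_mod_cast hℓn
  have hℓ0' : (0 : ℝ) < ℓ := by exact_mod_cast hℓ0
  have hn : (0 : ℝ) < n := hℓ0'.trans hℓn'
  refine ⟨by positivity, ?_⟩
  rw [div_lt_iff₀ hn]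
  nlinarith [pi_pos]

/-- **Uniform operator norm of the rational interpolation operator.**
Fix `β > 0`. There is a constant `C` such that for every `n > 1` and every
continuous `f : ℝ → ℂ` with `f(x) → 0` as `|x| → ∞` (with associated periodic
function `F`), `sup_x |R_n f(x)| ≤ C (log n) sup_x |f(x)|`. -/
theorem ratInterp_uniform_norm (β : ℝ) (hβ : 0 < β) :
    ∃ C : ℝ, 0 < C ∧ ∀ n : ℕ, 1 < n → ∀ f F : ℝ → ℂ,
      Continuous f →
      Filter.Tendsto f (Filter.cocompact ℝ) (nhds 0) →
      Function.Periodic F (2 * Real.pi) →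
      (∀ θ ∈ Set.Ioo (0 : ℝ) (2 * Real.pi), F θ = f (Tmap β θ)) →
      F 0 = 0 →
      (⨆ x : ℝ, ‖ratInterp β n F x‖) ≤ C * Real.log n * ⨆ x : ℝ, ‖f x‖ := by
  refine ⟨6, by norm_num, fun n hn f F hf hf0 _ hFf hF0 => ?_⟩
  have hfS : ∀ y, ‖f y‖ ≤ ⨆ x, ‖f x‖ :=
    le_ciSup (ZeroAtInftyContinuousMap.toBCF ⟨⟨f, hf⟩, hf0⟩).bddAbove_range_norm_comp
  have hnodes : ∀ ℓ < n, ‖F (2 * π * ℓ / n)‖ ≤ ⨆ x, ‖f x‖ := by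
    intro ℓ hℓ
    rcases Nat.eq_zero_or_pos ℓ with rfl | hℓ0
    · simpa [hF0] using (norm_nonneg _).trans (hfS 0)
    · exact hFf _ (node_mem_Ioo hℓ0 hℓ) ▸ hfS _
  have hlog : 3 + log n ≤ 6 * log n := by
    have := log_le_log two_pos (by exact_mod_cast hn : (2 : ℝ) ≤ n)
    linarith [log_two_gt_d9]
  refine ciSup_le fun x => (norm_ratInterp_le hβ.ne' hn hF0 hnodes x).trans ?_
  exact mul_le_mul_of_nonneg_right hlog ((norm_nonneg _).trans (hfS 0))
end

section
/- Fix β > 0. There is a constant C such that for every integer n > 1 and every continuous function f : ℝ → ℂ with f(x) → 0 as |x| → ∞, the rational interpolant R_nf and its derivative (R_nf)′ belong to L²(ℝ) and ( ∫_ℝ |R_nf(x)|² dx + ∫_ℝ |(R_nf)′(x)|² dx )^{1/2} ≤ C n^{3/2} sup_{x∈ℝ} |f(x)|. Consequently there is a constant C₁ such that for every f in the Sobolev space H¹(ℝ), ‖R_nf‖_{H¹(ℝ)} ≤ C₁ n^{3/2} ‖f‖_{H¹(ℝ)}. -/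
/-!
Everything reduces to the moments `∫ M^m M′` of the Möbius map `M = M_β` over `ℝ`: since
`M^(m+1)/(m+1)` is an antiderivative with the same limit `1` at `±∞`, they vanish unless
`m = -1`, where the integrand is `2iβ/(x² + β²)` and the moment is `2πi`. Writing
`M^k - 1 = ±(M - 1) ∑ M^e` (a geometric sum of `|k|` terms) and using `(M - 1)² = 2iβ M′`,
each Gram entry `∫ (M^j - 1) conj (M^k - 1)` is a sum of moments with at most one nonzero
term per `e`, hence `O(|j|)`. For the derivative, `conj M′ = (i/2β)(M⁻¹ - 1)²` makes
`∫ M^a M′ conj (M^b M′)` a combination of three moments, so each row of that Gram matrix has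
bounded sum. As the discrete Fourier coefficients are bounded by `sup |f|` and there are `n`
of them with `|k| ≤ n`, both `∫ |R_n f|²` and `∫ |(R_n f)′|²` are `O(n³ sup |f|²)`.
The `H¹` bound then follows from `|f(x)|² = -∫_x^∞ (|f|²)′ ≤ ‖f‖²_{L²} + ‖f′‖²_{L²}`.
-/

open MeasureTheory

/-- The `H¹(ℝ)` norm `(‖g‖²_{L²} + ‖g′‖²_{L²})^{1/2}`. -/
noncomputable def H1norm (g : ℝ → ℂ) : ℝ :=
  ((∫ x : ℝ, ‖g x‖ ^ 2) + ∫ x : ℝ, ‖deriv g x‖ ^ 2) ^ ((1 : ℝ) / 2)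

open Complex ComplexConjugate Filter Real

section Gram

variable {α ι 𝕜 : Type*} [RCLike 𝕜] [MeasurableSpace α] {μ : Measure α}

lemma ofReal_norm_sum_mul_sq (S : Finset ι) (c g : ι → 𝕜) :
    ((‖∑ k ∈ S, c k * g k‖ ^ 2 : ℝ) : 𝕜) =
      ∑ j ∈ S, ∑ k ∈ S, c j * conj (c k) * (g j * conj (g k)) := by
  rw [RCLike.ofReal_pow, ← RCLike.mul_conj, map_sum, Finset.sum_mul_sum]
  refine Finset.sum_congr rfl fun j _ => Finset.sum_congr rfl fun k _ => ?_
  rw [map_mul]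
  ring

lemma integrable_norm_sum_mul_sq (S : Finset ι) (c : ι → 𝕜) {g : ι → α → 𝕜}
    (hg : ∀ j ∈ S, ∀ k ∈ S, Integrable (fun x => g j x * conj (g k x)) μ) :
    Integrable (fun x => ‖∑ k ∈ S, c k * g k x‖ ^ 2) μ := by
  have h : Integrable (fun x => ∑ j ∈ S, ∑ k ∈ S, c j * conj (c k) * (g j x * conj (g k x))) μ :=
    integrable_finsetSum _ fun j hj => integrable_finsetSum _ fun k hk => (hg j hj k hk).const_mul _
  simpa only [← ofReal_norm_sum_mul_sq, RCLike.ofReal_re] using h.re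

lemma integral_norm_sum_mul_sq_le (S : Finset ι) {c : ι → 𝕜} {g : ι → α → 𝕜} {s : ℝ}
    (hc : ∀ k ∈ S, ‖c k‖ ≤ s)
    (hg : ∀ j ∈ S, ∀ k ∈ S, Integrable (fun x => g j x * conj (g k x)) μ) :
    ∫ x, ‖∑ k ∈ S, c k * g k x‖ ^ 2 ∂μ ≤
      s ^ 2 * ∑ j ∈ S, ∑ k ∈ S, ‖∫ x, g j x * conj (g k x) ∂μ‖ := by
  have hint : Integrable (fun x => ∑ j ∈ S, ∑ k ∈ S, c j * conj (c k) * (g j x * conj (g k x))) μ :=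
    integrable_finsetSum _ fun j hj => integrable_finsetSum _ fun k hk => (hg j hj k hk).const_mul _
  have hre : ∫ x, ‖∑ k ∈ S, c k * g k x‖ ^ 2 ∂μ = RCLike.re (∑ j ∈ S, ∑ k ∈ S,
      c j * conj (c k) * ∫ x, g j x * conj (g k x) ∂μ) := by
    have hsum : ∫ x, ∑ j ∈ S, ∑ k ∈ S, c j * conj (c k) * (g j x * conj (g k x)) ∂μ =
        ∑ j ∈ S, ∑ k ∈ S, c j * conj (c k) * ∫ x, g j x * conj (g k x) ∂μ := by
      rw [integral_finsetSum _ fun j hj => integrable_finsetSum _ fun k hk =>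
        (hg j hj k hk).const_mul _]
      refine Finset.sum_congr rfl fun j hj => ?_
      rw [integral_finsetSum _ fun k hk => (hg j hj k hk).const_mul _]
      simp_rw [integral_const_mul]
    rw [← hsum, ← integral_re hint]
    simp_rw [← ofReal_norm_sum_mul_sq, RCLike.ofReal_re]
  rw [hre, Finset.mul_sum]
  refine (RCLike.re_le_norm _).trans <| (norm_sum_le _ _).trans <| Finset.sum_le_sum fun j hj => ?_
  rw [Finset.mul_sum]
  refine (norm_sum_le _ _).trans <| Finset.sum_le_sum fun k hk => ?_
  have hs : 0 ≤ s := (norm_nonneg _).trans (hc j hj)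
  rw [norm_mul, norm_mul, RCLike.norm_conj, sq]
  gcongr
  · exact hc j hj
  · exact hc k hk

end Gram

section ZpowGeomSum

variable {K : Type*} [Field K] {z : K}

lemma sub_one_mul_sum_zpow_add (hz : z ≠ 0) (a : ℤ) (N : ℕ) :
    (z - 1) * ∑ t ∈ Finset.range N, z ^ (a + t) = z ^ (a + N) - z ^ a := by
  simp_rw [zpow_add₀ hz, zpow_natCast, ← Finset.mul_sum]
  rw [mul_left_comm, mul_comm (z - 1), geom_sum_mul]
  ring

lemma zpow_sub_one_eq_sign_mul_geom_sum (hz : z ≠ 0) (j : ℤ) :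
    z ^ j - 1 = (Int.sign j : K) * ((z - 1) * ∑ t ∈ Finset.range j.natAbs, z ^ (min j 0 + t)) := by
  rw [sub_one_mul_sum_zpow_add hz]
  rcases lt_trichotomy j 0 with hj | rfl | hj
  · rw [Int.sign_eq_neg_one_of_neg hj, min_eq_left hj.le, show j + j.natAbs = 0 by omega,
      zpow_zero]
    ring
  · simp
  · rw [Int.sign_eq_one_of_pos hj, min_eq_right hj.le, show 0 + (j.natAbs : ℤ) = j by omega,
      zpow_zero]
    ring

end ZpowGeomSum

lemma bddAbove_range_norm_of_tendsto_cocompact {α E : Type*} [TopologicalSpace α]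
    [NormedAddCommGroup E] {f : α → E} (hf : Continuous f)
    (htend : Tendsto f (cocompact α) (nhds 0)) : BddAbove (Set.range fun x => ‖f x‖) :=
  (ZeroAtInftyContinuousMap.toBCF ⟨⟨f, hf⟩, htend⟩).bddAbove_range_norm_comp

lemma norm_le_h1norm {f : ℝ → ℂ} (hdiff : Differentiable ℝ f)
    (htend : Tendsto f atTop (nhds 0)) (hf : MemLp f 2) (hf' : MemLp (deriv f) 2) (x₀ : ℝ) :
    ‖f x₀‖ ≤ H1norm f := by
  have h₀ := (memLp_two_iff_integrable_sq_norm hf.1).1 hf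
  have h₁ := (memLp_two_iff_integrable_sq_norm hf'.1).1 hf'
  have hint := h₀.add h₁
  have hbound (x : ℝ) : ‖2 * inner ℝ (f x) (deriv f x)‖ ≤ ‖f x‖ ^ 2 + ‖deriv f x‖ ^ 2 := by
    rw [Real.norm_eq_abs, abs_mul, abs_two]
    linarith [abs_real_inner_le_norm (f x) (deriv f x), two_mul_le_add_sq ‖f x‖ ‖deriv f x‖]
  have hG : Integrable fun x => 2 * inner ℝ (f x) (deriv f x) :=
    hint.mono' ((hf.1.inner hf'.1).const_mul 2) (Eventually.of_forall hbound)
  have hftc := integral_Ioi_of_hasDerivAt_of_tendsto' (a := x₀)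
    (fun x _ => (hdiff x).hasDerivAt.norm_sq) hG.integrableOn
    (by simpa using (htend.norm.pow 2))
  have hsq : ‖f x₀‖ ^ 2 ≤ (∫ x, ‖f x‖ ^ 2) + ∫ x, ‖deriv f x‖ ^ 2 := by
    calc ‖f x₀‖ ^ 2 = -∫ x in Set.Ioi x₀, 2 * inner ℝ (f x) (deriv f x) := by
          rw [hftc]
          ring
      _ ≤ ∫ x in Set.Ioi x₀, ‖f x‖ ^ 2 + ‖deriv f x‖ ^ 2 :=
          (neg_le_abs _).trans (norm_integral_le_of_norm_le hint.integrableOn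
            (Eventually.of_forall hbound))
      _ ≤ ∫ x, ‖f x‖ ^ 2 + ‖deriv f x‖ ^ 2 :=
          setIntegral_le_integral hint (Eventually.of_forall fun x => by positivity)
      _ = _ := integral_add h₀ h₁
  rw [H1norm, ← Real.sqrt_eq_rpow]
  exact Real.le_sqrt_of_sq_le hsq

section Mobius

noncomputable def mobDeriv (β x : ℝ) : ℂ := 2 * I * β / ((x : ℂ) + I * β) ^ 2

noncomputable def mobMoment (β : ℝ) (j : ℤ) : ℂ := ∫ x : ℝ, Mob β x ^ j * mobDeriv β x

variable {β : ℝ}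

lemma ofReal_add_I_mul_ne_zero (hβ : 0 < β) (x : ℝ) : (x : ℂ) + I * β ≠ 0 := by
  intro h
  simpa [hβ.ne'] using congrArg im h

lemma conj_ofReal_add_I_mul (x : ℝ) : conj ((x : ℂ) + I * β) = x - I * β := by
  simp [sub_eq_add_neg]

lemma mob_ne_zero (hβ : 0 < β) (x : ℝ) : Mob β x ≠ 0 := by
  refine div_ne_zero ?_ (ofReal_add_I_mul_ne_zero hβ x)
  rw [← conj_ofReal_add_I_mul]
  exact (map_ne_zero _).2 (ofReal_add_I_mul_ne_zero hβ x)

lemma conj_mob (x : ℝ) : conj (Mob β x) = (Mob β x)⁻¹ := by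
  simp only [Mob, map_div₀, ← conj_ofReal_add_I_mul, Complex.conj_conj, inv_div]

lemma norm_mob (hβ : 0 < β) (x : ℝ) : ‖Mob β x‖ = 1 := by
  rw [Mob, norm_div, ← conj_ofReal_add_I_mul, RCLike.norm_conj,
    div_self (norm_ne_zero_iff.2 (ofReal_add_I_mul_ne_zero hβ x))]

lemma mob_sub_one (hβ : 0 < β) (x : ℝ) : Mob β x - 1 = -(2 * I * β) * ((x : ℂ) + I * β)⁻¹ := by
  have := ofReal_add_I_mul_ne_zero hβ x
  rw [Mob]
  field_simp
  ring

lemma mob_sub_one_sq (hβ : 0 < β) (x : ℝ) : (Mob β x - 1) ^ 2 = 2 * I * β * mobDeriv β x := by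
  have := ofReal_add_I_mul_ne_zero hβ x
  rw [mob_sub_one hβ, mobDeriv]
  field_simp

lemma hasDerivAt_mob (hβ : 0 < β) (x : ℝ) : HasDerivAt (Mob β) (mobDeriv β x) x := by
  have hx := ofReal_add_I_mul_ne_zero hβ x
  have h := ((hasDerivAt_id (x : ℂ)).sub_const (I * β)).div
    ((hasDerivAt_id (x : ℂ)).add_const (I * β)) hx
  refine (h.comp_ofReal).congr_deriv ?_
  simp only [id, mobDeriv]
  ring

lemma continuous_mob (hβ : 0 < β) : Continuous (Mob β) :=
  continuous_iff_continuousAt.2 fun x => (hasDerivAt_mob hβ x).continuousAt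

lemma continuous_mobDeriv (hβ : 0 < β) : Continuous (mobDeriv β) := by
  unfold mobDeriv
  exact continuous_const.div (by fun_prop) fun x => pow_ne_zero 2 (ofReal_add_I_mul_ne_zero hβ x)

lemma tendsto_mob_cocompact (hβ : 0 < β) : Tendsto (Mob β) (cocompact ℝ) (nhds 1) := by
  have h : Tendsto (fun x : ℝ => ((x : ℂ) + I * β)⁻¹) (cocompact ℝ) (nhds 0) :=
    tendsto_inv₀_cobounded.comp ((tendsto_add_const_cobounded _).comp
      ((RCLike.tendsto_ofReal_cobounded_cobounded ℂ).mono_left Metric.cobounded_eq_cocompact.ge))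
  have := (h.const_mul (-(2 * I * β))).add_const 1
  simp only [mul_zero, zero_add] at this
  refine this.congr fun x => ?_
  rw [← mob_sub_one hβ]
  ring

lemma tendsto_mob_zpow_cocompact (hβ : 0 < β) (m : ℤ) :
    Tendsto (fun x => Mob β x ^ m) (cocompact ℝ) (nhds 1) := by
  simpa only [one_zpow, Function.comp_def] using
    ((continuousAt_zpow₀ (1 : ℂ) m (Or.inl one_ne_zero)).tendsto).comp (tendsto_mob_cocompact hβ)

lemma div_sq_add_sq_eq (hβ : β ≠ 0) (x : ℝ) :
    β / (β ^ 2 + x ^ 2) = β⁻¹ * (1 + (x / β) ^ 2)⁻¹ := by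
  field_simp

lemma integrable_div_sq_add_sq (hβ : 0 < β) : Integrable fun x : ℝ => β / (β ^ 2 + x ^ 2) := by
  simp_rw [div_sq_add_sq_eq hβ.ne']
  exact (integrable_inv_one_add_sq.comp_div hβ.ne').const_mul _

lemma integral_univ_div_sq_add_sq (hβ : 0 < β) : ∫ x : ℝ, β / (β ^ 2 + x ^ 2) = π := by
  simp_rw [div_sq_add_sq_eq hβ.ne']
  rw [integral_const_mul, Measure.integral_comp_div (fun y => (1 + y ^ 2)⁻¹),
    integral_univ_inv_one_add_sq, abs_of_pos hβ, smul_eq_mul]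
  field_simp

lemma mob_inv_mul_mobDeriv (hβ : 0 < β) (x : ℝ) :
    Mob β x ^ (-1 : ℤ) * mobDeriv β x = 2 * I * ((β / (β ^ 2 + x ^ 2) : ℝ) : ℂ) := by
  have h₁ := ofReal_add_I_mul_ne_zero hβ x
  have h₂ : (x : ℂ) - I * β ≠ 0 := by
    rw [← conj_ofReal_add_I_mul]
    exact (map_ne_zero _).2 h₁
  have h₃ : (β : ℂ) ^ 2 + (x : ℂ) ^ 2 = ((x : ℂ) + I * β) * ((x : ℂ) - I * β) := by
    ring_nf
    simp [I_sq]
  rw [zpow_neg_one, Mob, mobDeriv, inv_div]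
  push_cast
  rw [h₃]
  field_simp

lemma norm_mobDeriv (hβ : 0 < β) (x : ℝ) : ‖mobDeriv β x‖ = 2 * (β / (β ^ 2 + x ^ 2)) := by
  have h := congrArg norm (mob_inv_mul_mobDeriv hβ x)
  rwa [norm_mul, norm_zpow, norm_mob hβ, one_zpow, one_mul, norm_mul, Complex.norm_real,
    Real.norm_of_nonneg (by positivity), norm_mul, Complex.norm_I, mul_one, Complex.norm_two] at h

lemma integrable_mobDeriv (hβ : 0 < β) : Integrable (mobDeriv β) := by
  refine ((integrable_div_sq_add_sq hβ).const_mul 2).mono'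
    (continuous_mobDeriv hβ).aestronglyMeasurable (Eventually.of_forall fun x => ?_)
  rw [norm_mobDeriv hβ]

lemma integrable_zpow_mul_mobDeriv (hβ : 0 < β) (m : ℤ) :
    Integrable fun x => Mob β x ^ m * mobDeriv β x :=
  (integrable_mobDeriv hβ).bdd_mul (c := 1)
    ((continuous_mob hβ).zpow₀ m fun x => Or.inl (mob_ne_zero hβ x)).aestronglyMeasurable
    (Eventually.of_forall fun x => by rw [norm_zpow, norm_mob hβ, one_zpow])

lemma mobMoment_neg_one (hβ : 0 < β) : mobMoment β (-1) = 2 * π * I := by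
  simp_rw [mobMoment, mob_inv_mul_mobDeriv hβ, integral_const_mul, integral_complex_ofReal,
    integral_univ_div_sq_add_sq hβ]
  ring

lemma mobMoment_of_ne (hβ : 0 < β) {m : ℤ} (hm : m ≠ -1) : mobMoment β m = 0 := by
  have hm' : (m : ℂ) + 1 ≠ 0 := by exact_mod_cast (show m + 1 ≠ 0 by omega)
  have hderiv (x : ℝ) : HasDerivAt (fun y => ((m : ℂ) + 1)⁻¹ * Mob β y ^ (m + 1))
      (Mob β x ^ m * mobDeriv β x) x := by
    refine (((hasDerivAt_zpow (m + 1) _ (Or.inl (mob_ne_zero hβ x))).comp x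
      (hasDerivAt_mob hβ x)).const_mul _).congr_deriv ?_
    push_cast
    field_simp
    ring_nf
  have hlim := (tendsto_mob_zpow_cocompact hβ (m + 1)).const_mul ((m : ℂ) + 1)⁻¹
  rw [cocompact_eq_atBot_atTop, tendsto_sup] at hlim
  rw [mobMoment, integral_of_hasDerivAt_of_tendsto hderiv (integrable_zpow_mul_mobDeriv hβ m)
    hlim.1 hlim.2, sub_self]

lemma norm_mobMoment (hβ : 0 < β) (m : ℤ) :
    ‖mobMoment β m‖ = if m = -1 then 2 * π else 0 := by
  split_ifs with hm
  · rw [hm, mobMoment_neg_one hβ, norm_mul, Complex.norm_I, mul_one, norm_mul, Complex.norm_two,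
      Complex.norm_real, Real.norm_of_nonneg Real.pi_pos.le]
  · rw [mobMoment_of_ne hβ hm, norm_zero]

lemma sum_norm_mobMoment_le (hβ : 0 < β) (T : Finset ℤ) :
    ∑ m ∈ T, ‖mobMoment β m‖ ≤ 2 * π := by
  simp_rw [norm_mobMoment hβ, Finset.sum_ite_eq']
  split_ifs <;> linarith [Real.pi_pos]

lemma sum_norm_mobMoment_comp_le (hβ : 0 < β) {ι : Type*} [DecidableEq ι] (S : Finset ι)
    {φ : ι → ℤ} (hφ : Set.InjOn φ S) : ∑ k ∈ S, ‖mobMoment β (φ k)‖ ≤ 2 * π := by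
  rw [← Finset.sum_image (f := fun m => ‖mobMoment β m‖) hφ]
  exact sum_norm_mobMoment_le hβ _

end Mobius

section MobiusGram

variable {β : ℝ}

lemma mob_zpow_sub_one_mul (hβ : 0 < β) (j l : ℤ) (x : ℝ) :
    (Mob β x ^ j - 1) * (Mob β x ^ l - 1) = (Int.sign j * Int.sign l * (2 * I * β) : ℂ) *
      ∑ t ∈ Finset.range j.natAbs, ∑ s ∈ Finset.range l.natAbs,
        Mob β x ^ (min j 0 + t + (min l 0 + s)) * mobDeriv β x := by
  have hM := mob_ne_zero hβ x
  simp_rw [zpow_add₀ hM (min j 0 + _), ← Finset.sum_mul, ← Finset.mul_sum, ← Finset.sum_mul]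
  rw [zpow_sub_one_eq_sign_mul_geom_sum hM j, zpow_sub_one_eq_sign_mul_geom_sum hM l]
  linear_combination (Int.sign j * Int.sign l *
    (∑ t ∈ Finset.range j.natAbs, Mob β x ^ (min j 0 + t)) *
    ∑ s ∈ Finset.range l.natAbs, Mob β x ^ (min l 0 + s) : ℂ) * mob_sub_one_sq hβ x

lemma integrable_mob_zpow_sub_one_mul (hβ : 0 < β) (j l : ℤ) :
    Integrable fun x => (Mob β x ^ j - 1) * (Mob β x ^ l - 1) := by
  simp_rw [mob_zpow_sub_one_mul hβ]
  exact (integrable_finsetSum _ fun t _ => integrable_finsetSum _ fun s _ =>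
    integrable_zpow_mul_mobDeriv hβ _).const_mul _

lemma integral_mob_zpow_sub_one_mul (hβ : 0 < β) (j l : ℤ) :
    ∫ x, (Mob β x ^ j - 1) * (Mob β x ^ l - 1) = (Int.sign j * Int.sign l * (2 * I * β) : ℂ) *
      ∑ t ∈ Finset.range j.natAbs, ∑ s ∈ Finset.range l.natAbs,
        mobMoment β (min j 0 + t + (min l 0 + s)) := by
  simp_rw [mob_zpow_sub_one_mul hβ, integral_const_mul, mobMoment]
  rw [integral_finsetSum _ fun t _ => integrable_finsetSum _ fun s _ =>
    integrable_zpow_mul_mobDeriv hβ _]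
  simp_rw [integral_finsetSum _ fun s _ => integrable_zpow_mul_mobDeriv hβ _]

lemma norm_integral_mob_zpow_sub_one_mul_le (hβ : 0 < β) (j l : ℤ) :
    ‖∫ x, (Mob β x ^ j - 1) * (Mob β x ^ l - 1)‖ ≤ 4 * π * β * j.natAbs := by
  have hsign (m : ℤ) : ‖(Int.sign m : ℂ)‖ ≤ 1 := by
    rcases Int.sign_trichotomy m with h | h | h <;> simp [h]
  have hconst : ‖(Int.sign j * Int.sign l * (2 * I * β) : ℂ)‖ ≤ 2 * β := by
    rw [norm_mul, norm_mul, norm_mul, norm_mul, Complex.norm_I, Complex.norm_two,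
      Complex.norm_real, Real.norm_of_nonneg hβ.le]
    calc _ ≤ 1 * 1 * (2 * 1 * β) := by gcongr <;> exact hsign _
      _ = 2 * β := by ring
  have hsum : ‖∑ t ∈ Finset.range j.natAbs, ∑ s ∈ Finset.range l.natAbs,
      mobMoment β (min j 0 + t + (min l 0 + s))‖ ≤ j.natAbs * (2 * π) := by
    calc _ ≤ ∑ t ∈ Finset.range j.natAbs, ∑ s ∈ Finset.range l.natAbs,
          ‖mobMoment β (min j 0 + t + (min l 0 + s))‖ :=
          (norm_sum_le _ _).trans (Finset.sum_le_sum fun t _ => norm_sum_le _ _)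
      _ ≤ ∑ t ∈ Finset.range j.natAbs, 2 * π := Finset.sum_le_sum fun t _ =>
          sum_norm_mobMoment_comp_le hβ _ fun a _ b _ h => by simpa using h
      _ = _ := by simp
  rw [integral_mob_zpow_sub_one_mul hβ, norm_mul]
  calc _ ≤ 2 * β * (j.natAbs * (2 * π)) := by gcongr
    _ = _ := by ring

lemma conj_mobDeriv (hβ : 0 < β) (x : ℝ) :
    conj (mobDeriv β x) = I / (2 * β) * ((Mob β x)⁻¹ - 1) ^ 2 := by
  have h := congrArg conj (mob_sub_one_sq hβ x)
  simp only [map_pow, map_sub, map_one, conj_mob, map_mul, map_ofNat, Complex.conj_I,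
    Complex.conj_ofReal] at h
  have hβ' : (β : ℂ) ≠ 0 := by exact_mod_cast hβ.ne'
  rw [h]
  field_simp
  ring_nf
  simp [I_sq]

lemma mob_zpow_mul_mobDeriv_mul_conj (hβ : 0 < β) (a b : ℤ) (x : ℝ) :
    Mob β x ^ a * mobDeriv β x * conj (Mob β x ^ b * mobDeriv β x) =
      I / (2 * β) * (Mob β x ^ (a - b - 2) * mobDeriv β x
        - 2 * (Mob β x ^ (a - b - 1) * mobDeriv β x) + Mob β x ^ (a - b) * mobDeriv β x) := by
  have hM := mob_ne_zero hβ x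
  rw [map_mul, map_zpow₀, conj_mob, conj_mobDeriv hβ, inv_zpow', zpow_neg, zpow_sub₀ hM _ 2,
    zpow_sub₀ hM _ 1, zpow_sub₀ hM a b]
  field_simp
  ring

lemma integrable_mob_zpow_mul_mobDeriv_mul_conj (hβ : 0 < β) (a b : ℤ) :
    Integrable fun x => Mob β x ^ a * mobDeriv β x * conj (Mob β x ^ b * mobDeriv β x) := by
  simp_rw [mob_zpow_mul_mobDeriv_mul_conj hβ]
  exact ((((integrable_zpow_mul_mobDeriv hβ _).sub ((integrable_zpow_mul_mobDeriv hβ _).const_mul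
    2)).add (integrable_zpow_mul_mobDeriv hβ _))).const_mul _

lemma integral_mob_zpow_mul_mobDeriv_mul_conj (hβ : 0 < β) (a b : ℤ) :
    ∫ x, Mob β x ^ a * mobDeriv β x * conj (Mob β x ^ b * mobDeriv β x) =
      I / (2 * β) *
        (mobMoment β (a - b - 2) - 2 * mobMoment β (a - b - 1) + mobMoment β (a - b)) := by
  have hint := integrable_zpow_mul_mobDeriv hβ
  have hsub : Integrable fun x => Mob β x ^ (a - b - 2) * mobDeriv β x
      - 2 * (Mob β x ^ (a - b - 1) * mobDeriv β x) := (hint _).sub ((hint _).const_mul 2)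
  simp_rw [mob_zpow_mul_mobDeriv_mul_conj hβ]
  rw [integral_const_mul, integral_add hsub (hint _),
    integral_sub (hint _) ((hint _).const_mul 2), integral_const_mul]
  rfl

lemma sum_norm_integral_mob_zpow_mul_mobDeriv_mul_conj_le (hβ : 0 < β) (a : ℤ) (S : Finset ℤ)
    {φ : ℤ → ℤ} (hφ : Set.InjOn φ S) :
    ∑ k ∈ S, ‖∫ x, Mob β x ^ a * mobDeriv β x * conj (Mob β x ^ φ k * mobDeriv β x)‖ ≤
      4 * π / β := by
  have hsum (c : ℤ) : ∑ k ∈ S, ‖mobMoment β (a - φ k - c)‖ ≤ 2 * π :=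
    sum_norm_mobMoment_comp_le hβ S fun k hk l hl h => hφ hk hl (by simpa using h)
  have hnorm : ‖I / (2 * (β : ℂ))‖ = 1 / (2 * β) := by
    rw [norm_div, Complex.norm_I, norm_mul, Complex.norm_two, Complex.norm_real,
      Real.norm_of_nonneg hβ.le]
  -- the last moment is written `a - φ k - 0` so that `hsum` applies to all three
  calc _ ≤ ∑ k ∈ S, 1 / (2 * β) * (‖mobMoment β (a - φ k - 2)‖
        + 2 * ‖mobMoment β (a - φ k - 1)‖ + ‖mobMoment β (a - φ k - 0)‖) := by
        refine Finset.sum_le_sum fun k _ => ?_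
        rw [integral_mob_zpow_mul_mobDeriv_mul_conj hβ, norm_mul, hnorm, sub_zero]
        gcongr
        refine (norm_add_le _ _).trans (add_le_add_left ((norm_sub_le _ _).trans ?_) _)
        rw [norm_mul, Complex.norm_two]
    _ ≤ 1 / (2 * β) * (2 * π + 2 * (2 * π) + 2 * π) := by
        rw [← Finset.mul_sum, Finset.sum_add_distrib, Finset.sum_add_distrib, ← Finset.mul_sum]
        gcongr <;> exact hsum _
    _ = 4 * π / β := by
        field_simp
        ring

lemma conj_mob_zpow_sub_one (x : ℝ) (k : ℤ) : conj (Mob β x ^ k - 1) = Mob β x ^ (-k) - 1 := by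
  rw [map_sub, map_one, map_zpow₀, conj_mob, inv_zpow']

lemma integrable_mob_zpow_sub_one_mul_conj (hβ : 0 < β) (j k : ℤ) :
    Integrable fun x => (Mob β x ^ j - 1) * conj (Mob β x ^ k - 1) := by
  simp_rw [conj_mob_zpow_sub_one]
  exact integrable_mob_zpow_sub_one_mul hβ j (-k)

lemma integral_norm_sum_mob_zpow_sub_one_sq_le (hβ : 0 < β) (S : Finset ℤ) {c : ℤ → ℂ}
    {s : ℝ} (hc : ∀ k ∈ S, ‖c k‖ ≤ s) {N : ℕ} (hS : ∀ k ∈ S, k.natAbs ≤ N) :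
    ∫ x, ‖∑ k ∈ S, c k * (Mob β x ^ k - 1)‖ ^ 2 ≤ 4 * π * β * s ^ 2 * S.card ^ 2 * N := by
  refine (integral_norm_sum_mul_sq_le S hc fun j _ k _ =>
    integrable_mob_zpow_sub_one_mul_conj hβ j k).trans ?_
  calc _ ≤ s ^ 2 * ∑ j ∈ S, ∑ k ∈ S, 4 * π * β * N := by
        gcongr with j hj k
        simp_rw [conj_mob_zpow_sub_one]
        refine (norm_integral_mob_zpow_sub_one_mul_le hβ j (-k)).trans ?_
        gcongr
        exact_mod_cast hS j hj
    _ = _ := by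
        simp only [Finset.sum_const, nsmul_eq_mul]
        ring

lemma integral_norm_sum_mob_zpow_mul_mobDeriv_sq_le (hβ : 0 < β) (S : Finset ℤ) {d : ℤ → ℂ}
    {t : ℝ} (hd : ∀ k ∈ S, ‖d k‖ ≤ t) :
    ∫ x, ‖∑ k ∈ S, d k * (Mob β x ^ (k - 1) * mobDeriv β x)‖ ^ 2 ≤
      4 * π / β * t ^ 2 * S.card := by
  refine (integral_norm_sum_mul_sq_le S hd fun j _ k _ =>
    integrable_mob_zpow_mul_mobDeriv_mul_conj hβ _ _).trans ?_
  calc _ ≤ t ^ 2 * ∑ j ∈ S, 4 * π / β := by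
        gcongr with j
        exact sum_norm_integral_mob_zpow_mul_mobDeriv_mul_conj_le hβ _ S
          fun k _ l _ h => by simpa using h
    _ = _ := by
        rw [Finset.sum_const, nsmul_eq_mul]
        ring

end MobiusGram

section MobiusSum

variable {β : ℝ}

lemma hasDerivAt_sum_mob_zpow_sub_one (hβ : 0 < β) (S : Finset ℤ) (c : ℤ → ℂ) (x : ℝ) :
    HasDerivAt (fun y => ∑ k ∈ S, c k * (Mob β y ^ k - 1))
      (∑ k ∈ S, c k * k * (Mob β x ^ (k - 1) * mobDeriv β x)) x := by
  refine (HasDerivAt.fun_sum fun k _ => (((hasDerivAt_zpow k _ (Or.inl (mob_ne_zero hβ x))).comp x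
    (hasDerivAt_mob hβ x)).sub_const 1).const_mul (c k)).congr_deriv ?_
  refine Finset.sum_congr rfl fun k _ => ?_
  ring

lemma deriv_sum_mob_zpow_sub_one (hβ : 0 < β) (S : Finset ℤ) (c : ℤ → ℂ) :
    deriv (fun x => ∑ k ∈ S, c k * (Mob β x ^ k - 1)) =
      fun x => ∑ k ∈ S, c k * k * (Mob β x ^ (k - 1) * mobDeriv β x) :=
  funext fun x => (hasDerivAt_sum_mob_zpow_sub_one hβ S c x).deriv

lemma memLp_sum_mob_zpow_sub_one (hβ : 0 < β) (S : Finset ℤ) (c : ℤ → ℂ) :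
    MemLp (fun x => ∑ k ∈ S, c k * (Mob β x ^ k - 1)) 2 := by
  have hcont : Continuous fun x => ∑ k ∈ S, c k * (Mob β x ^ k - 1) :=
    continuous_iff_continuousAt.2 fun x =>
      (hasDerivAt_sum_mob_zpow_sub_one hβ S c x).continuousAt
  exact (memLp_two_iff_integrable_sq_norm hcont.aestronglyMeasurable).2
    (integrable_norm_sum_mul_sq S c fun j _ k _ => integrable_mob_zpow_sub_one_mul_conj hβ j k)

lemma memLp_deriv_sum_mob_zpow_sub_one (hβ : 0 < β) (S : Finset ℤ) (c : ℤ → ℂ) :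
    MemLp (deriv fun x => ∑ k ∈ S, c k * (Mob β x ^ k - 1)) 2 := by
  rw [deriv_sum_mob_zpow_sub_one hβ]
  have hcont : Continuous fun x => ∑ k ∈ S, c k * k * (Mob β x ^ (k - 1) * mobDeriv β x) :=
    continuous_finsetSum _ fun k _ => continuous_const.mul
      (((continuous_mob hβ).zpow₀ _ fun x => Or.inl (mob_ne_zero hβ x)).mul
        (continuous_mobDeriv hβ))
  exact (memLp_two_iff_integrable_sq_norm hcont.aestronglyMeasurable).2
    (integrable_norm_sum_mul_sq S _ fun j _ k _ =>
      integrable_mob_zpow_mul_mobDeriv_mul_conj hβ _ _)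

lemma h1norm_sum_mob_zpow_sub_one_le (hβ : 0 < β) (S : Finset ℤ) {c : ℤ → ℂ} {s : ℝ}
    (hs : 0 ≤ s) (hc : ∀ k ∈ S, ‖c k‖ ≤ s) {n : ℕ} (hcard : S.card ≤ n)
    (hS : ∀ k ∈ S, k.natAbs ≤ n) :
    H1norm (fun x => ∑ k ∈ S, c k * (Mob β x ^ k - 1)) ≤
      Real.sqrt (4 * π * (β + β⁻¹)) * (n : ℝ) ^ ((3 : ℝ) / 2) * s := by
  have hd : ∀ k ∈ S, ‖c k * k‖ ≤ s * n := fun k hk => by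
    have hk' : |(k : ℝ)| ≤ n := by
      rw [← Int.cast_abs, ← Int.natCast_natAbs]
      exact_mod_cast hS k hk
    rw [norm_mul, Complex.norm_intCast]
    exact mul_le_mul (hc k hk) hk' (abs_nonneg _) hs
  have hcard' : (S.card : ℝ) ≤ n := by exact_mod_cast hcard
  have hn : ((n : ℝ) ^ ((3 : ℝ) / 2)) ^ 2 = n ^ 3 := by
    rw [← Real.rpow_natCast, ← Real.rpow_mul n.cast_nonneg]
    norm_num
  rw [H1norm, deriv_sum_mob_zpow_sub_one hβ, ← Real.sqrt_eq_rpow,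
    Real.sqrt_le_left (by positivity), mul_pow, mul_pow, Real.sq_sqrt (by positivity), hn]
  refine (add_le_add (integral_norm_sum_mob_zpow_sub_one_sq_le hβ S hc hS)
    (integral_norm_sum_mob_zpow_mul_mobDeriv_sq_le hβ S hd)).trans ?_
  calc _ ≤ 4 * π * β * s ^ 2 * (n : ℝ) ^ 2 * n + 4 * π / β * (s * n) ^ 2 * n := by
        gcongr
    _ = _ := by
        rw [div_eq_mul_inv]
        ring

end MobiusSum

lemma norm_dftCoeff_le {n : ℕ} (hn : 0 < n) {F : ℝ → ℂ} {s : ℝ}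
    (hF : ∀ θ ∈ Set.Ico 0 (2 * π), ‖F θ‖ ≤ s) (k : ℤ) : ‖dftCoeff n F k‖ ≤ s := by
  have hn' : (0 : ℝ) < n := by exact_mod_cast hn
  have hterm : ∀ ℓ ∈ Finset.range n, ‖Complex.exp (-I * k * ((2 * π * ℓ / n : ℝ) : ℂ)) *
      F (2 * π * ℓ / n)‖ ≤ s := fun ℓ hℓ => by
    have hℓ' : (ℓ : ℝ) < n := by exact_mod_cast Finset.mem_range.1 hℓ
    rw [norm_mul, Complex.norm_exp, show (-I * k * ((2 * π * ℓ / n : ℝ) : ℂ)).re = 0 by simp,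
      Real.exp_zero, one_mul]
    refine hF _ ⟨by positivity, ?_⟩
    rw [div_lt_iff₀ hn']
    nlinarith [Real.pi_pos]
  rw [dftCoeff, norm_mul, norm_inv, Complex.norm_natCast, inv_mul_le_iff₀ hn']
  refine (norm_sum_le _ _).trans ((Finset.sum_le_sum hterm).trans ?_)
  rw [Finset.sum_const, Finset.card_range, nsmul_eq_mul]

lemma card_Icc_ratInterp_le {n : ℕ} (hn : 0 < n) :
    (Finset.Icc (-(((n - 1) / 2 : ℕ) : ℤ)) ((n / 2 : ℕ) : ℤ)).card ≤ n := by
  rw [Int.card_Icc]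
  omega

lemma natAbs_le_of_mem_Icc_ratInterp {n : ℕ} {k : ℤ}
    (hk : k ∈ Finset.Icc (-(((n - 1) / 2 : ℕ) : ℤ)) ((n / 2 : ℕ) : ℤ)) : k.natAbs ≤ n := by
  rw [Finset.mem_Icc] at hk
  omega

lemma h1norm_ratInterp_le {β : ℝ} (hβ : 0 < β) {n : ℕ} (hn : 0 < n) {f F : ℝ → ℂ}
    {T : ℝ → ℝ} (hf : Continuous f) (htend : Tendsto f (cocompact ℝ) (nhds 0))
    (hF : ∀ θ ∈ Set.Ioo 0 (2 * π), F θ = f (T θ)) (hF0 : F 0 = 0) :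
    H1norm (ratInterp β n F) ≤
      Real.sqrt (4 * π * (β + β⁻¹)) * (n : ℝ) ^ ((3 : ℝ) / 2) * ⨆ x, ‖f x‖ := by
  have hs : 0 ≤ ⨆ x, ‖f x‖ := Real.iSup_nonneg fun x => norm_nonneg _
  have hFs : ∀ θ ∈ Set.Ico 0 (2 * π), ‖F θ‖ ≤ ⨆ x, ‖f x‖ := by
    rintro θ ⟨h0, h2π⟩
    rcases h0.eq_or_lt with rfl | hpos
    · rwa [hF0, norm_zero]
    · rw [hF θ ⟨hpos, h2π⟩]
      exact le_ciSup (bddAbove_range_norm_of_tendsto_cocompact hf htend) _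
  exact h1norm_sum_mob_zpow_sub_one_le hβ _ hs (fun k _ => norm_dftCoeff_le hn hFs k)
    (card_Icc_ratInterp_le hn) fun k hk => natAbs_le_of_mem_Icc_ratInterp hk

/-- **`C⁰₀(ℝ) → H¹(ℝ)` and `H¹(ℝ) → H¹(ℝ)` bounds for the rational
interpolation operator.** Fix `β > 0`. There is a constant `C` such that for
every `n > 1` and every continuous `f : ℝ → ℂ` vanishing at infinity (with
associated periodic function `F`), `R_n f` and `(R_n f)′` are in `L²(ℝ)` and
`(∫ |R_n f|² + ∫ |(R_n f)′|²)^{1/2} ≤ C n^{3/2} sup_x |f(x)|`. Consequently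
there is `C₁` with `‖R_n f‖_{H¹(ℝ)} ≤ C₁ n^{3/2} ‖f‖_{H¹(ℝ)}` for every
`f ∈ H¹(ℝ)`. -/
theorem ratInterp_H1_norm (β : ℝ) (hβ : 0 < β) :
    (∃ C : ℝ, 0 < C ∧ ∀ n : ℕ, 1 < n → ∀ f F : ℝ → ℂ,
      Continuous f →
      Filter.Tendsto f (Filter.cocompact ℝ) (nhds 0) →
      Function.Periodic F (2 * Real.pi) →
      (∀ θ ∈ Set.Ioo (0 : ℝ) (2 * Real.pi), F θ = f (Tmap β θ)) →
      F 0 = 0 →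
      MemLp (fun x => ratInterp β n F x) 2 volume ∧
      MemLp (deriv (fun x => ratInterp β n F x)) 2 volume ∧
      H1norm (fun x => ratInterp β n F x)
        ≤ C * (n : ℝ) ^ ((3 : ℝ) / 2) * ⨆ x : ℝ, ‖f x‖) ∧
    (∃ C₁ : ℝ, 0 < C₁ ∧ ∀ n : ℕ, 1 < n → ∀ f F : ℝ → ℂ,
      Continuous f →
      Differentiable ℝ f →
      Filter.Tendsto f (Filter.cocompact ℝ) (nhds 0) →
      MemLp f 2 volume →
      MemLp (deriv f) 2 volume →
      Function.Periodic F (2 * Real.pi) →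
      (∀ θ ∈ Set.Ioo (0 : ℝ) (2 * Real.pi), F θ = f (Tmap β θ)) →
      F 0 = 0 →
      H1norm (fun x => ratInterp β n F x)
        ≤ C₁ * (n : ℝ) ^ ((3 : ℝ) / 2) * H1norm f) := by
  have hC : 0 < Real.sqrt (4 * Real.pi * (β + β⁻¹)) := Real.sqrt_pos.2 (by positivity)
  refine ⟨⟨_, hC, fun n hn f F hf htend _ hF hF0 => ⟨memLp_sum_mob_zpow_sub_one hβ _ _,
    memLp_deriv_sum_mob_zpow_sub_one hβ _ _, h1norm_ratInterp_le hβ (by omega) hf htend hF hF0⟩⟩,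
    ⟨_, hC, fun n hn f F hf hdiff htend hf₂ hf₂' _ hF hF0 => ?_⟩⟩
  refine (h1norm_ratInterp_le hβ (by omega) hf htend hF hF0).trans ?_
  gcongr
  exact ciSup_le (norm_le_h1norm hdiff (htend.mono_left atTop_le_cocompact) hf₂ hf₂')
end
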